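/- arXiv:1503.06081 — 2 statements merged into one kernel-verified Lean document; each statement's English description precedes it below -/
import Mathlib

section
/- Let S be a neutral set over a finite alphabet A with A ⊆ S, and let X ⊆ S be a finite S-maximal suffix code. Then Σ_{x ∈ X} ρ_S(x) = Card(A) − χ(S). -/
namespace Paper

variable {A : Type*}

/-- A set of words is factorial if it contains all factors (infixes) of its elements. -/
def Factorial (S : Set (List A)) : Prop :=
  ∀ u v : List A, u <:+: v → v ∈ S → u ∈ S

/-- Left extensions: `L_S(w) = {a | aw ∈ S}`. -/
def extL (S : Set (List A)) (w : List A) : Set A := {a | a :: w ∈ S}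

/-- Right extensions: `R_S(w) = {a | wa ∈ S}`. -/
def extR (S : Set (List A)) (w : List A) : Set A := {a | w ++ [a] ∈ S}

/-- Two-sided extensions: `E_S(w) = {(a,b) | awb ∈ S}`. -/
def extE (S : Set (List A)) (w : List A) : Set (A × A) := {p | p.1 :: (w ++ [p.2]) ∈ S}

/-- `m_S(w) = e_S(w) - ℓ_S(w) - r_S(w) + 1`. -/
noncomputable def mS (S : Set (List A)) (w : List A) : ℤ :=
  ((extE S w).ncard : ℤ) - (extL S w).ncard - (extR S w).ncard + 1

/-- A set is neutral if it is factorial and every nonempty word is neutral (`m_S(w) = 0`). -/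
def Neutral (S : Set (List A)) : Prop :=
  Factorial S ∧ ∀ w ∈ S, w ≠ [] → mS S w = 0

/-- The characteristic `χ(S) = 1 - m_S(ε)`. -/
noncomputable def chiS (S : Set (List A)) : ℤ := 1 - mS S []

end Paper

namespace Paper

/-- `ρ_S(x) = e_S(x) - ℓ_S(x)`. -/
noncomputable def rhoS {A : Type*} (S : Set (List A)) (w : List A) : ℤ :=
  ((extE S w).ncard : ℤ) - (extL S w).ncard

/-- `λ_S(x) = e_S(x) - r_S(x)`. -/
noncomputable def lamS {A : Type*} (S : Set (List A)) (w : List A) : ℤ :=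
  ((extE S w).ncard : ℤ) - (extR S w).ncard

/-- A prefix code: a set of nonempty words, none of which is a proper prefix of another. -/
def PrefixCode {A : Type*} (X : Set (List A)) : Prop :=
  [] ∉ X ∧ ∀ u ∈ X, ∀ v ∈ X, u <+: v → u = v

/-- A suffix code: a set of nonempty words, none of which is a proper suffix of another. -/
def SuffixCode {A : Type*} (X : Set (List A)) : Prop :=
  [] ∉ X ∧ ∀ u ∈ X, ∀ v ∈ X, u <:+ v → u = v

/-- A bifix code is both a prefix code and a suffix code. -/
def BifixCode {A : Type*} (X : Set (List A)) : Prop :=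
  PrefixCode X ∧ SuffixCode X

/-- An `S`-maximal prefix code: a prefix code contained in `S` and not properly contained
in another prefix code contained in `S`. -/
def MaxPrefixCode {A : Type*} (S X : Set (List A)) : Prop :=
  X ⊆ S ∧ PrefixCode X ∧ ∀ Y : Set (List A), PrefixCode Y → Y ⊆ S → X ⊆ Y → X = Y

/-- An `S`-maximal suffix code. -/
def MaxSuffixCode {A : Type*} (S X : Set (List A)) : Prop :=
  X ⊆ S ∧ SuffixCode X ∧ ∀ Y : Set (List A), SuffixCode Y → Y ⊆ S → X ⊆ Y → X = Y

/-- An `S`-maximal bifix code. -/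
def MaxBifixCode {A : Type*} (S X : Set (List A)) : Prop :=
  X ⊆ S ∧ BifixCode X ∧ ∀ Y : Set (List A), BifixCode Y → Y ⊆ S → X ⊆ Y → X = Y

/-- A set `S ≠ {ε}` is recurrent if it is factorial and any two of its words can be
completed into a word of `S`. -/
def Recurrent {A : Type*} (S : Set (List A)) : Prop :=
  S ≠ {([] : List A)} ∧ Factorial S ∧ ∀ u ∈ S, ∀ w ∈ S, ∃ v : List A, u ++ v ++ w ∈ S

/-- An infinite factorial set is uniformly recurrent if each of its words occurs as a
factor of every long enough word of `S`. -/
def UniformlyRecurrent {A : Type*} (S : Set (List A)) : Prop :=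
  S.Infinite ∧ Factorial S ∧
    ∀ u ∈ S, ∃ n : ℕ, 1 ≤ n ∧ ∀ w ∈ S, w.length = n → u <:+: w

/-- Membership in `X^*`: a concatenation of words of `X`. -/
def InStar {A : Type*} (X : Set (List A)) (m : List A) : Prop :=
  ∃ l : List (List A), (∀ u ∈ l, u ∈ X) ∧ l.flatten = m

/-- The set of parses of `w` with respect to a bifix code `X`: triples `(q, x, p)` with
`w = qxp`, `q` has no suffix in `X`, `x ∈ X^*`, `p` has no prefix in `X`. -/
def Parses {A : Type*} (X : Set (List A)) (w : List A) :
    Set (List A × List A × List A) :=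
  {t | t.1 ++ t.2.1 ++ t.2.2 = w ∧ (∀ x ∈ X, ¬ x <:+ t.1) ∧ InStar X t.2.1 ∧
        ∀ x ∈ X, ¬ x <+: t.2.2}

/-- The number of parses `d_X(w)`. -/
noncomputable def dX {A : Type*} (X : Set (List A)) (w : List A) : ℕ :=
  (Parses X w).ncard

/-- `X` has `S`-degree `n` : `n` is the maximal number of parses with respect to `X`
of a word of `S`. -/
def HasDegree {A : Type*} (S X : Set (List A)) (n : ℕ) : Prop :=
  IsGreatest (dX X '' S) n

/-- `v` is an internal factor of `x`, i.e. `x = uvw` with `u, w` nonempty. -/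
def InternalFactor {A : Type*} (v x : List A) : Prop :=
  ∃ u w : List A, u ≠ [] ∧ w ≠ [] ∧ u ++ v ++ w = x

/-- The set `CR_S(X)` of complete first return words to `X` in `S`: words of `S` with a
proper prefix in `X`, a proper suffix in `X` and no internal factor in `X`. -/
def CR {A : Type*} (S X : Set (List A)) : Set (List A) :=
  {w ∈ S | (∃ x ∈ X, x <+: w ∧ x ≠ w) ∧ (∃ x ∈ X, x <:+ w ∧ x ≠ w) ∧
    ∀ v : List A, InternalFactor v w → v ∉ X}

end Paper

/-!
Read from right to left, a factorial set `S` is a tree rooted at the empty word, the children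
of `y` being the words `a y` with `a ∈ L_S(y)`. Neutrality of the words `a y` says that `ρ_S` is
a flow on this tree: `Σ_{a ∈ L_S(y)} ρ_S(a y) = ρ_S(y)`, since both sides equal
`e_S(y) - ℓ_S(y)`. A finite `S`-maximal suffix code meets every branch of the tree exactly once,
so by induction on its depth the flow through it is `ρ_S(ε)`, which is `Card(A) - χ(S)` because
`r_S(ε) = Card(A)`.
-/

namespace Paper

variable {A : Type*} {S X : Set (List A)} {y : List A}

lemma extE_eq_biUnion (hS : Factorial S) (y : List A) :
    extE S y = ⋃ a ∈ extL S y, Prod.mk a '' extR S (a :: y) := by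
  ext ⟨a, b⟩
  simp only [extE, extL, extR, Set.mem_ofPred_eq, Set.mem_iUnion, Set.mem_image, Prod.mk.injEq,
    List.cons_append, exists_prop]
  constructor
  · intro h
    exact ⟨a, hS _ _ (List.prefix_append (a :: y) [b]).isInfix h, b, h, rfl, rfl⟩
  · rintro ⟨a, -, b, h, rfl, rfl⟩
    exact h

lemma ncard_extE_eq_finsum [Finite A] (hS : Factorial S) (y : List A) :
    (extE S y).ncard = ∑ᶠ a ∈ extL S y, (extR S (a :: y)).ncard := by
  rw [extE_eq_biUnion hS, Set.toFinite (extL S y) |>.ncard_biUnion (fun _ _ => Set.toFinite _)]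
  · exact finsum_mem_congr rfl fun a _ => Set.ncard_image_of_injective _ (Prod.mk_right_injective a)
  · refine fun a _ b _ hab => Set.disjoint_left.mpr ?_
    rintro _ ⟨_, _, rfl⟩ ⟨_, _, h⟩
    exact hab (congrArg Prod.fst h).symm

lemma rhoS_cons_of_mem_extL (hN : Neutral S) {a : A} (ha : a ∈ extL S y) :
    rhoS S (a :: y) = (extR S (a :: y)).ncard - 1 := by
  have h := hN.2 _ ha (List.cons_ne_nil a y)
  rw [mS] at h
  rw [rhoS]
  linarith

theorem finsum_rhoS_cons [Finite A] (hN : Neutral S) (y : List A) :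
    ∑ᶠ a ∈ extL S y, rhoS S (a :: y) = rhoS S y := by
  have hL : (extL S y).Finite := Set.toFinite _
  rw [rhoS, ncard_extE_eq_finsum hN.1, ← finsum_one (s := extL S y), Nat.cast_finsum_mem hL,
    Nat.cast_finsum_mem hL, ← finsum_mem_sub_distrib _ _ hL]
  exact finsum_mem_congr rfl fun a ha => by rw [rhoS_cons_of_mem_extL hN ha, Nat.cast_one]

lemma exists_cons_suffix_of_suffix_of_ne {x : List A} (h : y <:+ x) (hne : y ≠ x) :
    ∃ a, a :: y <:+ x := by
  obtain ⟨w, rfl⟩ := h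
  obtain ⟨l, a, rfl⟩ := (List.eq_nil_or_concat w).resolve_left (by rintro rfl; simp at hne)
  exact ⟨a, l, by simp⟩

lemma eq_of_cons_suffix_of_cons_suffix {x : List A} {a b : A} (ha : a :: y <:+ x)
    (hb : b :: y <:+ x) : a = b :=
  (List.cons.inj ((List.suffix_iff_eq_drop.mp ha).trans (List.suffix_iff_eq_drop.mp hb).symm)).1

theorem finsum_mem_eq_finsum_extL [Finite A] {M : Type*} [AddCommMonoid M] (hS : Factorial S)
    (hXS : X ⊆ S) (hXfin : X.Finite) (hXy : ∀ x ∈ X, y <:+ x ∧ x ≠ y) (f : List A → M) :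
    ∑ᶠ x ∈ X, f x = ∑ᶠ a ∈ extL S y, ∑ᶠ x ∈ {x ∈ X | a :: y <:+ x}, f x := by
  have hcover : X = ⋃ a ∈ extL S y, {x ∈ X | a :: y <:+ x} := by
    ext x
    simp only [Set.mem_iUnion, Set.mem_sep_iff, exists_prop]
    refine ⟨fun hx => ?_, fun ⟨_, _, hx, _⟩ => hx⟩
    obtain ⟨a, hay⟩ := exists_cons_suffix_of_suffix_of_ne (hXy x hx).1 (hXy x hx).2.symm
    exact ⟨a, hS _ _ hay.isInfix (hXS hx), hx, hay⟩
  have hdisj : (extL S y).PairwiseDisjoint fun a => {x ∈ X | a :: y <:+ x} :=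
    fun a _ b _ hab => Set.disjoint_left.mpr fun _ ⟨_, hax⟩ ⟨_, hbx⟩ =>
      hab (eq_of_cons_suffix_of_cons_suffix hax hbx)
  conv_lhs => rw [hcover]
  exact finsum_mem_biUnion hdisj (Set.toFinite _) fun a _ => hXfin.subset (Set.sep_subset _ _)

def SuffixComplete (S X : Set (List A)) (y : List A) : Prop :=
  ∀ w ∈ S, y <:+ w → ∃ x ∈ X, x <:+ w ∨ w <:+ x

lemma SuffixCode.mono {Y : Set (List A)} (hY : SuffixCode Y) (hXY : X ⊆ Y) : SuffixCode X :=
  ⟨fun h => hY.1 (hXY h), fun u hu v hv => hY.2 u (hXY hu) v (hXY hv)⟩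

lemma MaxSuffixCode.suffixComplete (hX : MaxSuffixCode S X) {y : List A} (hy : y ≠ []) :
    SuffixComplete S X y := by
  intro w hw hyw
  by_contra! hcomp
  have hw_ne : w ≠ [] := fun h => hy (List.eq_nil_of_suffix_nil (h ▸ hyw))
  have hcode : SuffixCode (insert w X) := by
    refine ⟨by rintro (h | h); exacts [hw_ne h.symm, hX.2.1.1 h], ?_⟩
    rintro u (rfl | hu) v (rfl | hv) huv
    · rfl
    · exact absurd huv (hcomp v hv).2
    · exact absurd huv (hcomp u hu).1
    · exact hX.2.1.2 u hu v hv huv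
  have hmem : w ∈ X := (hX.2.2 _ hcode (Set.insert_subset hw hX.1) (Set.subset_insert _ _)) ▸
    Set.mem_insert w X
  exact (hcomp w hmem).1 List.suffix_rfl

lemma SuffixComplete.of_suffix {z : List A} (hcomp : SuffixComplete S X y) (hyz : y <:+ z) :
    SuffixComplete S X z :=
  fun w hw hzw => hcomp w hw (hyz.trans hzw)

lemma SuffixComplete.sep_cons {a : A} (hcomp : SuffixComplete S X (a :: y))
    (hXy : ∀ x ∈ X, y <:+ x ∧ x ≠ y) : SuffixComplete S {x ∈ X | a :: y <:+ x} (a :: y) := by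
  intro w hw haw
  obtain ⟨x, hx, hxw⟩ := hcomp w hw haw
  obtain ⟨b, hbx⟩ := exists_cons_suffix_of_suffix_of_ne (hXy x hx).1 (hXy x hx).2.symm
  refine ⟨x, ⟨hx, ?_⟩, hxw⟩
  rcases hxw with hxw | hwx
  · exact List.suffix_of_suffix_length_le haw hxw hbx.length_le
  · exact haw.trans hwx

theorem finsum_rhoS_eq_of_suffixComplete [Finite A] (hN : Neutral S) (hy : y ∈ S) (hXS : X ⊆ S)
    (hXfin : X.Finite) (hX : SuffixCode X) (hXy : ∀ x ∈ X, y <:+ x)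
    (hcomp : SuffixComplete S X y) : ∑ᶠ x ∈ X, rhoS S x = rhoS S y := by
  obtain ⟨n, hn⟩ : ∃ n, ∀ x ∈ X, x.length < y.length + n := by
    obtain ⟨N, hN⟩ := (hXfin.image List.length).bddAbove
    exact ⟨N + 1, fun x hx => by have := hN ⟨x, hx, rfl⟩; omega⟩
  induction n generalizing y X with
  | zero =>
    obtain ⟨x, hx, -⟩ := hcomp y hy List.suffix_rfl
    exact absurd (hXy x hx).length_le (by simpa using hn x hx)
  | succ n ih =>
    by_cases hyX : y ∈ X
    · have hXeq : X = {y} := Set.eq_singleton_iff_unique_mem.mpr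
        ⟨hyX, fun x hx => (hX.2 y hyX x hx (hXy x hx)).symm⟩
      rw [hXeq, finsum_mem_singleton]
    have hXy' : ∀ x ∈ X, y <:+ x ∧ x ≠ y := fun x hx => ⟨hXy x hx, ne_of_mem_of_not_mem hx hyX⟩
    rw [finsum_mem_eq_finsum_extL hN.1 hXS hXfin hXy', ← finsum_rhoS_cons hN y]
    refine finsum_mem_congr rfl fun a ha => ih ha ((Set.sep_subset _ _).trans hXS)
      (hXfin.subset (Set.sep_subset _ _)) (hX.mono (Set.sep_subset _ _)) (fun x hx => hx.2)
      ((hcomp.of_suffix (List.suffix_cons a y)).sep_cons hXy') fun x hx => ?_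
    have := hn x hx.1
    simp only [List.length_cons]
    omega

lemma rhoS_nil_eq [Fintype A] (hA : ∀ a : A, [a] ∈ S) :
    rhoS S [] = Fintype.card A - chiS S := by
  have hR : extR S [] = Set.univ := Set.eq_univ_of_forall hA
  rw [rhoS, chiS, mS, hR, Set.ncard_univ, Nat.card_eq_fintype_card]
  ring

end Paper

open Paper in
/-- In a neutral set `S` containing the alphabet, any finite `S`-maximal suffix code `X`
satisfies `Σ_{x ∈ X} ρ_S(x) = Card(A) - χ(S)`. -/
theorem rho_of_maximal_suffix_code
    {A : Type*} [Fintype A] (S X : Set (List A))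
    (hN : Neutral S) (hA : ∀ a : A, [a] ∈ S)
    (hXfin : X.Finite) (hX : MaxSuffixCode S X) :
    (∑ᶠ x ∈ X, rhoS S x) = (Fintype.card A : ℤ) - chiS S := by
  have hX_nil : ∀ x ∈ X, [] <:+ x ∧ x ≠ [] :=
    fun x hx => ⟨List.nil_suffix, ne_of_mem_of_not_mem hx hX.2.1.1⟩
  rw [finsum_mem_eq_finsum_extL hN.1 hX.1 hXfin hX_nil, ← rhoS_nil_eq hA, ← finsum_rhoS_cons hN]
  refine finsum_mem_congr rfl fun a ha => finsum_rhoS_eq_of_suffixComplete hN ha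
    ((Set.sep_subset _ _).trans hX.1) (hXfin.subset (Set.sep_subset _ _))
    (hX.2.1.mono (Set.sep_subset _ _)) (fun x hx => hx.2)
    ((hX.suffixComplete (List.cons_ne_nil a [])).sep_cons hX_nil)
end

section
/- Let S be a recurrent neutral set over a finite alphabet A with A ⊆ S, and let X ⊆ S be a finite S-maximal bifix code of S-degree n. Then the set P of proper prefixes of words of X satisfies Σ_{p ∈ P} ρ_S(p) = n(Card(A) − χ(S)). -/
/-!
Neutrality of the nonempty words makes `ρ_S` additive under left extension,
`ρ_S(w) = ∑ₐ ρ_S(aw)` (all terms vanish off `S`), so for `K ≥ |p|` the value `ρ_S(p)` is the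
sum of `ρ_S` over the words of length `K` ending with `p`. Choosing `K` larger than the length
of every word of `X` and exchanging the two sums, each `w ∈ S` of length `K` gets weighted by
the number of proper prefixes of `X` that are suffixes of `w`.

For a suffix code a parse is determined by its last component, so `d_X(w)` counts the suffixes
of `w` without a prefix in `X`; by reversal, `d_X` grows under extension on either side. In a
recurrent set every word `y` without a prefix in `X` is a proper prefix of a word of `X`:
otherwise the suffixes starting with `y` of a word `y v₁ y v₂ ⋯ y ∈ S` would give more than `n`
parses. Hence, if `d_X(w₀) = n` and `w₀ v w ∈ S`, the `n` suffixes of `w₀ v w` without a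
prefix in `X` are exactly the proper prefixes of `X` that are suffixes of `w`, and the sum
becomes `n ∑_{|w| = K} ρ_S(w) = n ρ_S(ε) = n (Card A - χ(S))`.
-/

namespace Paper

variable {A : Type*} {S X : Set (List A)}

def NoPrefixIn (X : Set (List A)) (w : List A) : Prop := ∀ x ∈ X, ¬ x <+: w

def NoSuffixIn (X : Set (List A)) (w : List A) : Prop := ∀ x ∈ X, ¬ x <:+ w

def properPrefixes (X : Set (List A)) : Set (List A) := {p | ∃ x ∈ X, p <+: x ∧ p ≠ x}

lemma finite_setOf_suffix (w : List A) : {p | p <:+ w}.Finite :=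
  w.tails.finite_toSet.subset fun p hp => (List.mem_tails p w).2 hp

lemma properPrefixes_finite (hX : X.Finite) : (properPrefixes X).Finite :=
  (hX.biUnion fun x _ => x.inits.finite_toSet).subset fun _ ⟨_, hx, hpx, _⟩ =>
    Set.mem_biUnion hx ((List.mem_inits _ _).2 hpx)

lemma exists_length_lt_of_mem_properPrefixes (hX : X.Finite) :
    ∃ K, ∀ p ∈ properPrefixes X, p.length < K :=
  ⟨hX.toFinset.sup List.length, fun _ ⟨_, hx, hpx, hne⟩ =>
    (hpx.length_le.lt_of_ne fun h => hne (hpx.eq_of_length h)).trans_le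
      (Finset.le_sup (hX.mem_toFinset.2 hx))⟩

lemma PrefixCode.noPrefixIn_of_mem_properPrefixes (hX : PrefixCode X) {p : List A}
    (hp : p ∈ properPrefixes X) : NoPrefixIn X p := by
  obtain ⟨x, hx, hpx, hne⟩ := hp
  intro y hy hyp
  obtain rfl : y = x := hX.2 y hy x hx (hyp.trans hpx)
  exact hne (hpx.eq_of_length (le_antisymm hpx.length_le hyp.length_le))

lemma inStar_nil (X : Set (List A)) : InStar X [] := ⟨[], by simp, rfl⟩

lemma InStar.append_mem {m x : List A} (hm : InStar X m) (hx : x ∈ X) : InStar X (m ++ x) := by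
  obtain ⟨l, hl, rfl⟩ := hm
  exact ⟨l ++ [x], by simpa [or_imp, forall_and] using ⟨hl, hx⟩, by simp⟩

lemma exists_noSuffixIn_append_inStar (hX : [] ∉ X) (u : List A) :
    ∃ q m, q ++ m = u ∧ NoSuffixIn X q ∧ InStar X m := by
  by_cases hu : NoSuffixIn X u
  · exact ⟨u, [], by simp, hu, inStar_nil X⟩
  · simp only [NoSuffixIn, not_forall, not_not] at hu
    obtain ⟨x, hx, u', rfl⟩ := hu
    have : u'.length < (u' ++ x).length := by
      simpa using List.length_pos_iff.2 fun h => hX (h ▸ hx)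
    obtain ⟨q, m, rfl, hq, hm⟩ := exists_noSuffixIn_append_inStar hX u'
    exact ⟨q, m ++ x, by simp, hq, hm.append_mem hx⟩
termination_by u.length

lemma SuffixCode.eq_of_append_eq_append (hX : SuffixCode X) {q₁ q₂ m₁ m₂ : List A}
    (hq₁ : NoSuffixIn X q₁) (hq₂ : NoSuffixIn X q₂) (hm₁ : InStar X m₁) (hm₂ : InStar X m₂)
    (h : q₁ ++ m₁ = q₂ ++ m₂) : q₁ = q₂ := by
  obtain ⟨l₁, hl₁, rfl⟩ := hm₁
  obtain ⟨l₂, hl₂, rfl⟩ := hm₂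
  induction l₁ using List.reverseRecOn generalizing l₂ with
  | nil =>
    rcases l₂.eq_nil_or_concat' with rfl | ⟨l₂, x₂, rfl⟩
    · simpa using h
    · exact absurd ⟨q₂ ++ l₂.flatten, by simpa using h.symm⟩ (hq₁ x₂ (hl₂ x₂ (by simp)))
  | append_singleton l₁ x₁ ih =>
    rcases l₂.eq_nil_or_concat' with rfl | ⟨l₂, x₂, rfl⟩
    · exact absurd ⟨q₁ ++ l₁.flatten, by simpa using h⟩ (hq₂ x₁ (hl₁ x₁ (by simp)))
    · simp only [List.flatten_concat, ← List.append_assoc] at h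
      have hx₁ : x₁ ∈ X := hl₁ x₁ (by simp)
      have hx₂ : x₂ ∈ X := hl₂ x₂ (by simp)
      obtain rfl : x₁ = x₂ := by
        rcases List.suffix_or_suffix_of_suffix ⟨_, h⟩ (List.suffix_append _ x₂) with h' | h'
        exacts [hX.2 x₁ hx₁ x₂ hx₂ h', (hX.2 x₂ hx₂ x₁ hx₁ h').symm]
      exact ih (fun x hx => hl₁ x (by simp [hx])) l₂ (fun x hx => hl₂ x (by simp [hx]))
        (List.append_cancel_right h)

lemma SuffixCode.dX_eq_ncard (hX : SuffixCode X) (w : List A) :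
    dX X w = {p | p <:+ w ∧ NoPrefixIn X p}.ncard := by
  have himage : (fun t : List A × List A × List A => t.2.2) '' Parses X w
      = {p | p <:+ w ∧ NoPrefixIn X p} := by
    ext p
    constructor
    · rintro ⟨⟨q, m, p⟩, ⟨rfl, -, -, hp⟩, rfl⟩
      exact ⟨List.suffix_append _ _, hp⟩
    · rintro ⟨⟨u, rfl⟩, hp⟩
      obtain ⟨q, m, rfl, hq, hm⟩ := exists_noSuffixIn_append_inStar hX.1 u
      exact ⟨(q, m, p), ⟨rfl, hq, hm, hp⟩, rfl⟩
  have hinj : Set.InjOn (fun t : List A × List A × List A => t.2.2) (Parses X w) := by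
    rintro ⟨q₁, m₁, p⟩ ⟨h₁, hq₁, hm₁, -⟩ ⟨q₂, m₂, _⟩ ⟨h₂, hq₂, hm₂, -⟩ rfl
    have hqm : q₁ ++ m₁ = q₂ ++ m₂ := List.append_cancel_right (h₁.trans h₂.symm)
    obtain rfl := hX.eq_of_append_eq_append hq₁ hq₂ hm₁ hm₂ hqm
    rw [List.append_cancel_left hqm]
  rw [dX, ← himage, hinj.ncard_image]

lemma SuffixCode.dX_le_dX_append_left (hX : SuffixCode X) (u w : List A) :
    dX X w ≤ dX X (u ++ w) := by
  rw [hX.dX_eq_ncard, hX.dX_eq_ncard]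
  exact Set.ncard_le_ncard (fun p hp => ⟨hp.1.trans (List.suffix_append u w), hp.2⟩)
    ((finite_setOf_suffix _).subset fun _ hp => hp.1)

lemma noSuffixIn_reverse_iff {w : List A} :
    NoSuffixIn (List.reverse ⁻¹' X) w.reverse ↔ NoPrefixIn X w := by
  refine ⟨fun h x hx hxw => h x.reverse (by simpa) (List.reverse_suffix.2 hxw),
    fun h x hx hxw => h x.reverse hx ?_⟩
  simpa using List.reverse_prefix.2 hxw

lemma noPrefixIn_reverse_iff {w : List A} :
    NoPrefixIn (List.reverse ⁻¹' X) w.reverse ↔ NoSuffixIn X w := by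
  refine ⟨fun h x hx hxw => h x.reverse (by simpa) (List.reverse_prefix.2 hxw),
    fun h x hx hxw => h x.reverse hx ?_⟩
  simpa using List.reverse_suffix.2 hxw

lemma InStar.reverse {m : List A} (hm : InStar X m) :
    InStar (List.reverse ⁻¹' X) m.reverse := by
  obtain ⟨l, hl, rfl⟩ := hm
  refine ⟨(l.map List.reverse).reverse, ?_, List.reverse_flatten.symm⟩
  simp only [List.mem_reverse, List.mem_map]
  rintro _ ⟨u, hu, rfl⟩
  simpa using hl u hu

lemma inStar_reverse_iff {m : List A} : InStar (List.reverse ⁻¹' X) m.reverse ↔ InStar X m :=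
  ⟨fun hm => by simpa [← Set.preimage_comp] using hm.reverse, InStar.reverse⟩

lemma PrefixCode.reverse (hX : PrefixCode X) : SuffixCode (List.reverse ⁻¹' X) :=
  ⟨hX.1, fun _ hu _ hv huv => List.reverse_injective (hX.2 _ hu _ hv (List.reverse_prefix.2 huv))⟩

lemma dX_reverse (X : Set (List A)) (w : List A) :
    dX (List.reverse ⁻¹' X) w.reverse = dX X w := by
  let τ : List A × List A × List A → List A × List A × List A :=
    fun t => (t.2.2.reverse, t.2.1.reverse, t.1.reverse)
  have hτ : Function.Involutive τ := fun t => by simp [τ]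
  have hparses : τ ⁻¹' Parses (List.reverse ⁻¹' X) w.reverse = Parses X w := by
    ext ⟨q, m, p⟩
    change (_ ∧ NoSuffixIn _ _ ∧ InStar _ _ ∧ NoPrefixIn _ _) ↔
      (_ ∧ NoSuffixIn X q ∧ InStar X m ∧ NoPrefixIn X p)
    rw [noSuffixIn_reverse_iff, inStar_reverse_iff, noPrefixIn_reverse_iff,
      ← List.reverse_append, ← List.reverse_append, List.reverse_inj, List.append_assoc]
    tauto
  rw [dX, dX, ← hparses, Set.ncard_preimage_of_injective_subset_range hτ.injective
    (by simp [hτ.surjective.range_eq])]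

lemma PrefixCode.dX_le_dX_append_right (hX : PrefixCode X) (w u : List A) :
    dX X w ≤ dX X (w ++ u) := by
  rw [← dX_reverse X w, ← dX_reverse X (w ++ u), List.reverse_append]
  exact hX.reverse.dX_le_dX_append_left _ _

lemma Recurrent.exists_ne_nil (hS : Recurrent S) (hne : S.Nonempty) : ∃ w ∈ S, w ≠ [] := by
  by_contra! h
  obtain ⟨w, hw⟩ := hne
  exact hS.1 (Set.eq_singleton_iff_unique_mem.2 ⟨h w hw ▸ hw, h⟩)

lemma MaxBifixCode.nonempty (hX : MaxBifixCode S X) {w : List A} (hw : w ∈ S) (hw₀ : w ≠ []) :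
    X.Nonempty := by
  rw [Set.nonempty_iff_ne_empty]
  rintro rfl
  have hnil : [] ∉ ({w} : Set (List A)) := fun h => hw₀ (Set.mem_singleton_iff.1 h).symm
  have hcode : BifixCode ({w} : Set (List A)) :=
    ⟨⟨hnil, fun _ hu _ hv _ => Set.subsingleton_singleton hu hv⟩,
      ⟨hnil, fun _ hu _ hv _ => Set.subsingleton_singleton hu hv⟩⟩
  exact Set.singleton_ne_empty w
    (hX.2.2 {w} hcode (Set.singleton_subset_iff.2 hw) (Set.empty_subset _)).symm

lemma Recurrent.exists_finset_suffix_prefix (hS : Recurrent S) {y : List A} (hy : y ∈ S)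
    (hy₀ : y ≠ []) (k : ℕ) :
    ∃ z ∈ S, ∃ T : Finset (List A), T.card = k ∧ ∀ t ∈ T, t <:+ z ∧ y <+: t := by
  induction k with
  | zero => exact ⟨y, hy, ∅, rfl, by simp⟩
  | succ k ih =>
    obtain ⟨z, hz, T, hT, hTz⟩ := ih
    obtain ⟨v, hzvy⟩ := hS.2.2 z hz y hy
    classical
    refine ⟨z ++ v ++ y, hzvy, insert y (T.image (· ++ (v ++ y))), ?_, ?_⟩
    · rw [Finset.card_insert_of_notMem, Finset.card_image_of_injective _
        (fun _ _ h => List.append_cancel_right h), hT]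
      intro hmem
      obtain ⟨t, ht, hty⟩ := Finset.mem_image.1 hmem
      have hlen := congrArg List.length hty
      simp only [List.length_append] at hlen
      have := (hTz t ht).2.length_le
      have := List.length_pos_iff.2 hy₀
      omega
    · simp only [Finset.mem_insert, Finset.mem_image]
      rintro _ (rfl | ⟨t, ht, rfl⟩)
      · exact ⟨List.suffix_append _ _, List.prefix_refl _⟩
      · obtain ⟨u, rfl⟩ := (hTz t ht).1
        exact ⟨⟨u, by simp⟩, (hTz t ht).2.trans (List.prefix_append _ _)⟩

lemma mem_properPrefixes_of_noPrefixIn (hS : Recurrent S) (hX : SuffixCode X)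
    (hXne : X.Nonempty) {n : ℕ} (hn : ∀ w ∈ S, dX X w ≤ n) {y : List A} (hy : y ∈ S)
    (hyX : NoPrefixIn X y) : y ∈ properPrefixes X := by
  by_contra hyP
  have hyx : ∀ x ∈ X, ¬ y <+: x := fun x hx hyx =>
    hyP ⟨x, hx, hyx, fun h => hyX x hx (h ▸ List.prefix_refl y)⟩
  have hy₀ : y ≠ [] := by
    rintro rfl
    obtain ⟨x, hx⟩ := hXne
    exact hyx x hx List.nil_prefix
  obtain ⟨z, hz, T, hT, hTz⟩ := hS.exists_finset_suffix_prefix hy hy₀ (n + 1)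
  have hdz : n + 1 ≤ dX X z := by
    rw [hX.dX_eq_ncard, ← hT, ← Set.ncard_coe_finset]
    refine Set.ncard_le_ncard (fun t ht => ⟨(hTz t ht).1, fun x hx hxt => ?_⟩)
      ((finite_setOf_suffix z).subset fun _ hp => hp.1)
    rcases List.prefix_or_prefix_of_prefix hxt (hTz t ht).2 with h | h
    exacts [hyX x hx h, hyx x hx h]
  exact absurd (hn z hz) (by omega)

lemma ncard_properPrefixes_suffix_eq (hS : Recurrent S) (hX : BifixCode X)
    (hXne : X.Nonempty) {n : ℕ} (hdeg : HasDegree S X n) {K : ℕ}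
    (hK : ∀ p ∈ properPrefixes X, p.length < K) {w : List A} (hw : w ∈ S)
    (hwK : K ≤ w.length) : {p ∈ properPrefixes X | p <:+ w}.ncard = n := by
  obtain ⟨w₀, hw₀, hdw₀⟩ := hdeg.1
  obtain ⟨v, hz⟩ := hS.2.2 w₀ hw₀ w hw
  have hdz : dX X (w₀ ++ v ++ w) = n := by
    refine le_antisymm (hdeg.2 ⟨_, hz, rfl⟩) ?_
    rw [← hdw₀, List.append_assoc]
    exact hX.1.dX_le_dX_append_right w₀ (v ++ w)
  rw [← hdz, hX.2.dX_eq_ncard]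
  congr 1
  ext p
  constructor
  · rintro ⟨hp, hpw⟩
    exact ⟨hpw.trans (List.suffix_append _ _), hX.1.noPrefixIn_of_mem_properPrefixes hp⟩
  · rintro ⟨hpz, hpX⟩
    have hp := mem_properPrefixes_of_noPrefixIn hS hX.2 hXne (fun u hu => hdeg.2 ⟨u, hu, rfl⟩)
      (hS.2.1 p _ hpz.isInfix hz) hpX
    exact ⟨hp, List.suffix_of_suffix_length_le hpz (List.suffix_append _ _)
      ((hK p hp).le.trans hwK)⟩

section Extensions

lemma Factorial.extE_eq_empty (hS : Factorial S) {w : List A} (hw : w ∉ S) : extE S w = ∅ :=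
  Set.eq_empty_of_forall_notMem fun q hq => hw (hS w _ ⟨[q.1], [q.2], rfl⟩ hq)

lemma Factorial.extL_eq_empty (hS : Factorial S) {w : List A} (hw : w ∉ S) : extL S w = ∅ :=
  Set.eq_empty_of_forall_notMem fun a ha => hw (hS w _ ⟨[a], [], by simp⟩ ha)

lemma Factorial.extR_eq_empty (hS : Factorial S) {w : List A} (hw : w ∉ S) : extR S w = ∅ :=
  Set.eq_empty_of_forall_notMem fun b hb => hw (hS w _ ⟨[], [b], rfl⟩ hb)

lemma Factorial.rhoS_eq_zero (hS : Factorial S) {w : List A} (hw : w ∉ S) : rhoS S w = 0 := by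
  simp [rhoS, hS.extE_eq_empty hw, hS.extL_eq_empty hw]

open scoped Classical in
lemma Neutral.rhoS_cons (hS : Neutral S) (a : A) (w : List A) :
    rhoS S (a :: w) = (extR S (a :: w)).ncard - if a :: w ∈ S then 1 else 0 := by
  by_cases h : a :: w ∈ S
  · have := hS.2 _ h (List.cons_ne_nil a w)
    simp only [mS] at this
    rw [if_pos h, rhoS]
    linarith
  · simp [hS.1.rhoS_eq_zero h, hS.1.extR_eq_empty h, h]

variable [Fintype A]

lemma ncard_extE (w : List A) :
    (extE S w).ncard = ∑ a, (extR S (a :: w)).ncard := by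
  rw [← Nat.card_coe_set_eq]
  exact (Nat.card_congr (Equiv.subtypeProdEquivSigmaSubtype fun a b => b ∈ extR S (a :: w))).trans
    Nat.card_sigma

open scoped Classical in
lemma ncard_extL (w : List A) :
    (extL S w).ncard = ∑ a, if a :: w ∈ S then 1 else 0 := by
  rw [Set.ncard_eq_toFinset_card', ← Finset.card_filter]
  congr 1
  ext a
  simp only [Finset.mem_filter, Finset.mem_univ, true_and, Set.mem_toFinset]
  rfl

lemma Neutral.rhoS_eq_sum_rhoS_cons (hS : Neutral S) (w : List A) :
    rhoS S w = ∑ a, rhoS S (a :: w) := by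
  classical
  rw [Finset.sum_congr rfl fun a _ => hS.rhoS_cons a w, Finset.sum_sub_distrib, rhoS, ncard_extE,
    ncard_extL]
  push_cast
  rfl

lemma rhoS_nil (hA : ∀ a : A, [a] ∈ S) : rhoS S [] = (Fintype.card A : ℤ) - chiS S := by
  have hR : extR S [] = Set.univ := Set.eq_univ_of_forall hA
  rw [chiS, mS, hR, Set.ncard_univ, Nat.card_eq_fintype_card, rhoS]
  ring

end Extensions

section Telescoping

noncomputable def wordsOfLength [Finite A] (k : ℕ) : Finset (List A) :=
  (List.finite_length_eq A k).toFinset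

@[simp]
lemma mem_wordsOfLength [Finite A] {k : ℕ} {w : List A} : w ∈ wordsOfLength k ↔ w.length = k :=
  Set.Finite.mem_toFinset _

variable [Fintype A] [DecidableEq A]

lemma sum_wordsOfLength_succ_filter_suffix {M : Type*} [AddCommMonoid M] {p : List A} {k : ℕ}
    (hk : p.length ≤ k) (f : List A → M) :
    ∑ w ∈ wordsOfLength (k + 1) with p <:+ w, f w =
      ∑ w ∈ wordsOfLength k with p <:+ w, ∑ a, f (a :: w) := by
  rw [← Finset.sum_product']
  symm
  refine Finset.sum_bij (fun x _ => x.2 :: x.1) ?_ ?_ ?_ fun _ _ => rfl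
  · rintro ⟨w, a⟩ h
    simp only [Finset.mem_product, Finset.mem_filter, mem_wordsOfLength] at h ⊢
    exact ⟨by simp [h.1.1], h.1.2.trans (List.suffix_cons a w)⟩
  · rintro ⟨w, a⟩ - ⟨w', a'⟩ - h
    simp only [List.cons.injEq] at h
    exact Prod.ext h.2 h.1
  · rintro (_ | ⟨a, w⟩) h
    · simp at h
    simp only [Finset.mem_filter, mem_wordsOfLength, List.length_cons, List.suffix_cons_iff] at h
    refine ⟨(w, a), ?_, rfl⟩
    simp only [Finset.mem_product, Finset.mem_filter, mem_wordsOfLength, Finset.mem_univ]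
    rcases h with ⟨hw, rfl | hpw⟩
    · simp only [List.length_cons] at hk
      omega
    · exact ⟨⟨by omega, hpw⟩, trivial⟩

lemma Neutral.rhoS_eq_sum_wordsOfLength (hS : Neutral S) {p : List A} {k : ℕ}
    (hk : p.length ≤ k) : rhoS S p = ∑ w ∈ wordsOfLength k with p <:+ w, rhoS S w := by
  induction k, hk using Nat.le_induction with
  | base =>
    have : {w ∈ (wordsOfLength p.length : Finset (List A)) | p <:+ w} = {p} := by
      ext w
      simp only [Finset.mem_filter, mem_wordsOfLength, Finset.mem_singleton]
      exact ⟨fun ⟨hw, hpw⟩ => (hpw.eq_of_length hw.symm).symm,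
        fun h => ⟨h ▸ rfl, h ▸ List.suffix_refl p⟩⟩
    rw [this, Finset.sum_singleton]
  | succ k hk ih =>
    rw [sum_wordsOfLength_succ_filter_suffix hk, ih]
    exact Finset.sum_congr rfl fun w _ => hS.rhoS_eq_sum_rhoS_cons w

end Telescoping

end Paper

open Paper in
/-- For a recurrent neutral set `S` containing the alphabet and a finite `S`-maximal
bifix code `X` of `S`-degree `n`, the set `P` of proper prefixes of `X` satisfies
`ρ_S(P) = n (Card A - χ(S))`. -/
theorem rho_of_proper_prefixes_of_maximal_bifix_code
    {A : Type*} [Fintype A] (S X : Set (List A)) (n : ℕ)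
    (hS : Recurrent S) (hN : Neutral S) (hA : ∀ a : A, [a] ∈ S)
    (hXfin : X.Finite) (hX : MaxBifixCode S X) (hdeg : HasDegree S X n) :
    (∑ᶠ p ∈ {p : List A | ∃ x ∈ X, p <+: x ∧ p ≠ x}, rhoS S p)
      = n * ((Fintype.card A : ℤ) - chiS S) := by
  classical
  obtain ⟨w₀, hw₀, -⟩ := hdeg.1
  obtain ⟨u, hu, hu_ne⟩ := hS.exists_ne_nil ⟨w₀, hw₀⟩
  have hXne := hX.nonempty hu hu_ne
  obtain ⟨K, hK⟩ := exists_length_lt_of_mem_properPrefixes hXfin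
  have hP := properPrefixes_finite hXfin
  change ∑ᶠ p ∈ properPrefixes X, rhoS S p = _
  rw [finsum_mem_eq_finite_toFinset_sum _ hP, ← rhoS_nil hA]
  calc ∑ p ∈ hP.toFinset, rhoS S p
      = ∑ p ∈ hP.toFinset, ∑ w ∈ wordsOfLength K with p <:+ w, rhoS S w :=
        Finset.sum_congr rfl fun p hp =>
          hN.rhoS_eq_sum_wordsOfLength (hK p (hP.mem_toFinset.1 hp)).le
    _ = ∑ w ∈ wordsOfLength K, ∑ p ∈ hP.toFinset with p <:+ w, rhoS S w :=
        Finset.sum_comm' fun p w => by simp only [Finset.mem_filter]; tauto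
    _ = ∑ w ∈ wordsOfLength K, n * rhoS S w := by
        refine Finset.sum_congr rfl fun w hw => ?_
        rw [Finset.sum_const, nsmul_eq_mul]
        by_cases hwS : w ∈ S
        · rw [← Set.ncard_coe_finset, Finset.coe_filter]
          simp only [Set.Finite.mem_toFinset,
            ncard_properPrefixes_suffix_eq hS hX.2.1 hXne hdeg hK hwS (mem_wordsOfLength.1 hw).ge]
        · rw [hN.1.rhoS_eq_zero hwS, mul_zero, mul_zero]
    _ = n * rhoS S [] := by
        rw [← Finset.mul_sum, hN.rhoS_eq_sum_wordsOfLength (Nat.zero_le K)]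
        simp
end
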